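/- Entropy–dissipation balance (De Giorgi formulation of equilibrium flow): let x: [0,T] → ℝ_{>0}^V solve ẋ = −S ∇Ψ*_x(Sᵀ(∇Φ(x) − ∇Φ(x̃))), with f(x) := Sᵀ(∇Φ(x) − ∇Φ(x̃)) and j(x) := ∇Ψ*_x(f(x)), and suppose t ↦ Ψ*_{x(t)}(f(x(t))) + Ψ_{x(t)}(j(x(t))) is continuous. Then for all t ∈ [0,T], D[x(0)‖x̃] − D[x(t)‖x̃] = ∫₀ᵗ (Ψ*_{x(t')}(f(x(t'))) + Ψ_{x(t')}(j(x(t')))) dt'. -/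

import Mathlib

/-! Along the flow, the chain rule gives `d/dt D[x‖x̃] = ⟨∇Φ(x) - ∇Φ(x̃), ẋ⟩ = -⟨j, f⟩` with
`f = Sᵀ(∇Φ(x) - ∇Φ(x̃))` and `j = ∇Ψ*_x(f)`. Since `j` is the gradient of the convex function
`Ψ*_x` at `f`, the supremum defining its conjugate is attained at `f` (Fenchel–Young equality),
so `Ψ*_x(f) + Ψ_x(j) = ⟨j, f⟩`. The balance is then the fundamental theorem of calculus. -/

open Matrix Filter Set

noncomputable def grad {n : ℕ} (F : (Fin n → ℝ) → ℝ) (x : Fin n → ℝ) : Fin n → ℝ :=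
  fun i => fderiv ℝ F x (Pi.single i 1)

def IsDissipation {n : ℕ} (Ψ : (Fin n → ℝ) → ℝ) : Prop :=
  StrictConvexOn ℝ Set.univ Ψ ∧ ContDiff ℝ 1 Ψ ∧
  Tendsto (fun f => Ψ f / ‖f‖) (Bornology.cobounded (Fin n → ℝ)) atTop ∧
  (∀ f, Ψ (-f) = Ψ f) ∧ Ψ 0 = 0

noncomputable def legendre {n : ℕ} (Ψ : (Fin n → ℝ) → ℝ) (j : Fin n → ℝ) : ℝ :=
  ⨆ f : Fin n → ℝ, (j ⬝ᵥ f - Ψ f)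

noncomputable def breg {n : ℕ} (F : (Fin n → ℝ) → ℝ) (x x' : Fin n → ℝ) : ℝ :=
  F x - F x' - (x - x') ⬝ᵥ grad F x'

def posOrth (n : ℕ) : Set (Fin n → ℝ) := {x | ∀ i, 0 < x i}

def IsThermo {n : ℕ} (Φ : (Fin n → ℝ) → ℝ) : Prop :=
  StrictConvexOn ℝ (posOrth n) Φ ∧
  (∀ x ∈ posOrth n, DifferentiableAt ℝ Φ x) ∧
  Set.BijOn (grad Φ) (posOrth n) Set.univ ∧
  (∀ xin ∈ posOrth n, ∀ xbd ∈ frontier {x : Fin n → ℝ | ∀ i, 0 ≤ x i},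
    Tendsto (fun lam : ℝ => deriv (fun l : ℝ => Φ (l • xin + (1 - l) • xbd)) lam)
      (nhdsWithin 0 (Set.Ioi 0)) atBot)

theorem ConvexOn.add_fderiv_sub_le {E : Type*} [NormedAddCommGroup E] [NormedSpace ℝ E]
    {s : Set E} {Ψ : E → ℝ} {Ψ' : E →L[ℝ] ℝ} {f g : E}
    (hΨ : ConvexOn ℝ s Ψ) (hf : f ∈ s) (hg : g ∈ s) (hd : HasFDerivAt Ψ Ψ' f) :
    Ψ f + Ψ' (g - f) ≤ Ψ g := by
  have hline : ConvexOn ℝ (Icc 0 1) (Ψ ∘ AffineMap.lineMap (k := ℝ) f g) :=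
    (hΨ.comp_affineMap _).subset (fun t ht => hΨ.1.lineMap_mem hf hg ht) (convex_Icc 0 1)
  have hderiv : HasDerivAt (Ψ ∘ AffineMap.lineMap (k := ℝ) f g) (Ψ' (g - f)) 0 := by
    have hl : HasDerivAt (fun t : ℝ => AffineMap.lineMap (k := ℝ) f g t) (g - f) 0 := by
      simpa [AffineMap.lineMap_apply_module'] using
        ((hasDerivAt_id (0 : ℝ)).smul_const (g - f)).add_const f
    have hd0 : HasFDerivAt Ψ Ψ' (AffineMap.lineMap f g (0 : ℝ)) := by simpa using hd
    exact hd0.comp_hasDerivAt 0 hl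
  have hslope := hline.le_slope_of_hasDerivAt (by simp) (by simp) one_pos hderiv
  simp only [slope_def_field, Function.comp_apply, AffineMap.lineMap_apply_zero,
    AffineMap.lineMap_apply_one, sub_zero, div_one] at hslope
  linarith

theorem grad_dotProduct {n : ℕ} (F : (Fin n → ℝ) → ℝ) (x v : Fin n → ℝ) :
    grad F x ⬝ᵥ v = fderiv ℝ F x v := by
  conv_rhs => rw [← Finset.univ_sum_single v, map_sum]
  refine Finset.sum_congr rfl fun i _ => ?_
  simp only [grad]
  rw [mul_comm, ← smul_eq_mul, ← map_smul, ← Pi.single_smul', smul_eq_mul, mul_one]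

theorem legendre_grad_of_convexOn {n : ℕ} {Ψ : (Fin n → ℝ) → ℝ} (hΨ : ConvexOn ℝ univ Ψ)
    {f : Fin n → ℝ} (hd : DifferentiableAt ℝ Ψ f) :
    legendre Ψ (grad Ψ f) = grad Ψ f ⬝ᵥ f - Ψ f := by
  have hmax : ∀ g, grad Ψ f ⬝ᵥ g - Ψ g ≤ grad Ψ f ⬝ᵥ f - Ψ f := fun g => by
    have := hΨ.add_fderiv_sub_le (mem_univ f) (mem_univ g) hd.hasFDerivAt
    rw [← grad_dotProduct, dotProduct_sub] at this
    linarith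
  exact le_antisymm (ciSup_le hmax) (le_ciSup ⟨_, forall_mem_range.2 hmax⟩ f)

theorem IsDissipation.add_legendre_grad {n : ℕ} {Ψ : (Fin n → ℝ) → ℝ} (hΨ : IsDissipation Ψ)
    (f : Fin n → ℝ) :
    Ψ f + legendre Ψ (grad Ψ f) = grad Ψ f ⬝ᵥ f := by
  rw [legendre_grad_of_convexOn hΨ.1.convexOn (hΨ.2.1.differentiable one_ne_zero f)]
  ring

theorem HasDerivAt.breg_left {n : ℕ} {Φ : (Fin n → ℝ) → ℝ} {x : ℝ → Fin n → ℝ}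
    {v x' : Fin n → ℝ} {s : ℝ} (hx : HasDerivAt x v s) (hΦ : DifferentiableAt ℝ Φ (x s)) :
    HasDerivAt (fun u => breg Φ (x u) x') ((grad Φ (x s) - grad Φ x') ⬝ᵥ v) s := by
  have hΦx : HasDerivAt (fun u => Φ (x u)) (grad Φ (x s) ⬝ᵥ v) s := by
    rw [grad_dotProduct]
    exact hΦ.hasFDerivAt.comp_hasDerivAt s hx
  have hlin : HasDerivAt (fun u => (x u - x') ⬝ᵥ grad Φ x') (v ⬝ᵥ grad Φ x') s := by
    simpa [dotProduct] using HasDerivAt.fun_sum fun i _ =>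
      ((hasDerivAt_pi.1 hx i).sub_const (x' i)).mul_const (grad Φ x' i)
  refine ((hΦx.sub_const (Φ x')).sub hlin).congr_deriv ?_
  rw [sub_dotProduct, dotProduct_comm v]

theorem hasDerivAt_neg_breg_of_gradient_flow {V E : ℕ} {S : Matrix (Fin V) (Fin E) ℝ}
    {Φ : (Fin V → ℝ) → ℝ} {Ψ : (Fin E → ℝ) → ℝ} {x : ℝ → Fin V → ℝ} {x' : Fin V → ℝ} {s : ℝ}
    (hΦ : DifferentiableAt ℝ Φ (x s)) (hΨ : IsDissipation Ψ)
    (hx : HasDerivAt x (-(S *ᵥ grad Ψ (Sᵀ *ᵥ (grad Φ (x s) - grad Φ x')))) s) :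
    HasDerivAt (fun u => -breg Φ (x u) x')
      (Ψ (Sᵀ *ᵥ (grad Φ (x s) - grad Φ x'))
        + legendre Ψ (grad Ψ (Sᵀ *ᵥ (grad Φ (x s) - grad Φ x')))) s := by
  refine (hx.breg_left hΦ).neg.congr_deriv ?_
  rw [hΨ.add_legendre_grad, dotProduct_mulVec, vecMul_transpose, dotProduct_neg, neg_neg,
    dotProduct_comm]

theorem entropy_dissipation_balance_general {V E : ℕ}
    (S : Matrix (Fin V) (Fin E) ℝ)
    (Φ : (Fin V → ℝ) → ℝ) (hΦ : IsThermo Φ)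
    (Ψstar : (Fin V → ℝ) → (Fin E → ℝ) → ℝ)
    (hdiss : ∀ x ∈ posOrth V, IsDissipation (Ψstar x))
    (xtil : Fin V → ℝ)
    (T : ℝ) (x : ℝ → Fin V → ℝ)
    (hpos : ∀ t ∈ Set.Icc (0:ℝ) T, x t ∈ posOrth V)
    (hflow : ∀ t ∈ Set.Icc (0:ℝ) T,
      HasDerivAt x
        (-(S *ᵥ grad (Ψstar (x t)) (Sᵀ *ᵥ (grad Φ (x t) - grad Φ xtil)))) t)
    (hcont : ContinuousOn
      (fun t => Ψstar (x t) (Sᵀ *ᵥ (grad Φ (x t) - grad Φ xtil))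
        + legendre (Ψstar (x t))
            (grad (Ψstar (x t)) (Sᵀ *ᵥ (grad Φ (x t) - grad Φ xtil))))
      (Set.Icc (0:ℝ) T)) :
    ∀ t ∈ Set.Icc (0:ℝ) T,
      breg Φ (x 0) xtil - breg Φ (x t) xtil =
        ∫ t' in (0:ℝ)..t,
          (Ψstar (x t') (Sᵀ *ᵥ (grad Φ (x t') - grad Φ xtil))
            + legendre (Ψstar (x t'))
                (grad (Ψstar (x t')) (Sᵀ *ᵥ (grad Φ (x t') - grad Φ xtil)))) := by
  intro t ⟨ht0, htT⟩
  have hsub : uIcc 0 t ⊆ Icc 0 T := by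
    rw [uIcc_of_le ht0]
    exact Icc_subset_Icc le_rfl htT
  have hderiv : ∀ s ∈ uIcc 0 t, HasDerivAt (fun u => -breg Φ (x u) xtil) _ s := fun s hs =>
    hasDerivAt_neg_breg_of_gradient_flow (hΦ.2.1 _ (hpos s (hsub hs)))
      (hdiss _ (hpos s (hsub hs))) (hflow s (hsub hs))
  rw [intervalIntegral.integral_eq_sub_of_hasDerivAt hderiv
    ((hcont.mono hsub).intervalIntegrable)]
  ring

/-- Entropy–dissipation balance (integral De Giorgi formulation):
D[x(0)‖x̃] − D[x(t)‖x̃] = ∫₀ᵗ (Ψ*(f) + Ψ(j)) dt' along the equilibrium flow. -/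
theorem entropy_dissipation_balance {V E : ℕ}
    (S : Matrix (Fin V) (Fin E) ℝ)
    (Φ : (Fin V → ℝ) → ℝ) (hΦ : IsThermo Φ)
    (Ψstar : (Fin V → ℝ) → (Fin E → ℝ) → ℝ)
    (hdiss : ∀ x ∈ posOrth V, IsDissipation (Ψstar x))
    (xtil : Fin V → ℝ) (hxtil : xtil ∈ posOrth V)
    (T : ℝ) (x : ℝ → Fin V → ℝ)
    (hpos : ∀ t ∈ Set.Icc (0:ℝ) T, x t ∈ posOrth V)
    (hflow : ∀ t ∈ Set.Icc (0:ℝ) T,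
      HasDerivAt x
        (-(S *ᵥ grad (Ψstar (x t)) (Sᵀ *ᵥ (grad Φ (x t) - grad Φ xtil)))) t)
    (hcont : ContinuousOn
      (fun t => Ψstar (x t) (Sᵀ *ᵥ (grad Φ (x t) - grad Φ xtil))
        + legendre (Ψstar (x t))
            (grad (Ψstar (x t)) (Sᵀ *ᵥ (grad Φ (x t) - grad Φ xtil))))
      (Set.Icc (0:ℝ) T)) :
    ∀ t ∈ Set.Icc (0:ℝ) T,
      breg Φ (x 0) xtil - breg Φ (x t) xtil =
        ∫ t' in (0:ℝ)..t,
          (Ψstar (x t') (Sᵀ *ᵥ (grad Φ (x t') - grad Φ xtil))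
            + legendre (Ψstar (x t'))
                (grad (Ψstar (x t')) (Sᵀ *ᵥ (grad Φ (x t') - grad Φ xtil)))) :=
  entropy_dissipation_balance_general S Φ hΦ Ψstar hdiss xtil T x hpos hflow hcont
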